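/- Let 𝒪 be an order ideal in P = K[x_0,…,x_n], fix a labeling of ∂𝒪 ordered increasingly by degree, and let G be a homogeneous ∂𝒪-prebasis. Let f ∈ P be nonzero and h ∈ ⟨𝒪⟩. Then the following are equivalent: (i) f − h ∈ ⟨𝒯G⟩; (ii) f →⁺_G h; (iii) f − h has an ind_𝒪(f)-lower representation by 𝒯G. Moreover, if f is homogeneous of degree d and h ∈ ⟨𝒪_d⟩, these are also equivalent to: f − h ∈ ⟨𝒯G_d⟩, and to: f − h has an ind_𝒪(f)-lower representation by 𝒯G_d. -/

import Mathlib

open MvPolynomial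

namespace Border

/-- A term of `K[x_0, …, x_n]`, identified with its exponent vector. -/
abbrev Term (n : ℕ) := Fin (n + 1) →₀ ℕ

variable {n : ℕ}

/-- The (standard) degree of a term. -/
def tdeg (m : Term n) : ℕ := ∑ i, m i

/-- An order ideal: a nonempty set of terms closed under divisors. -/
def IsOrderIdeal (O : Set (Term n)) : Prop :=
  O.Nonempty ∧ ∀ τ ∈ O, ∀ τ' : Term n, τ' ≤ τ → τ' ∈ O

/-- The border `∂𝒪 = (x_0·𝒪 ∪ ⋯ ∪ x_n·𝒪) ∖ 𝒪`. -/
def border (O : Set (Term n)) : Set (Term n) :=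
  {σ | σ ∉ O ∧ ∃ r : Fin (n + 1), ∃ τ ∈ O, σ = τ + Finsupp.single r 1}

/-- Multiplicative set of a border term `σ`, with respect to a labeling `lab` of the border:
`𝒯_σ = {η : σ' ∤ η·σ for every border term σ' with a larger label}`. -/
def mulSet (O : Set (Term n)) (lab : Term n → ℕ) (σ : Term n) : Set (Term n) :=
  {η | ∀ σ' ∈ border O, lab σ < lab σ' → ¬ σ' ≤ η + σ}

/-- The cone `C(σ) = {η·σ : η ∈ 𝒯_σ}`. -/
def cone (O : Set (Term n)) (lab : Term n → ℕ) (σ : Term n) : Set (Term n) :=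
  (fun η => η + σ) '' mulSet O lab σ

/-- A labeling of the border which is injective and ordered increasingly by degree. -/
def DegOrderedLabeling (O : Set (Term n)) (lab : Term n → ℕ) : Prop :=
  Set.InjOn lab (border O) ∧
    ∀ σ ∈ border O, ∀ σ' ∈ border O, lab σ < lab σ' → tdeg σ ≤ tdeg σ'

/-- Iterated border closures: `∂⁰𝒪 := 𝒪`, and the `(k+1)`-st closure adds the border. -/
def borderClosure (O : Set (Term n)) : ℕ → Set (Term n)
  | 0 => O
  | k + 1 => borderClosure O k ∪ border (borderClosure O k)

/-- The index `ind_𝒪(τ)`: the least `k` with `τ ∈ ∂^k𝒪`. -/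
noncomputable def ind (O : Set (Term n)) (τ : Term n) : ℕ :=
  sInf {k | τ ∈ borderClosure O k}

/-- Degree-`d` part of a set of terms. -/
def Od (O : Set (Term n)) (d : ℕ) : Set (Term n) := {τ | τ ∈ O ∧ tdeg τ = d}

variable {K : Type*} [Field K]

/-- The index of a nonzero polynomial: the maximal index of a term of its support. -/
noncomputable def indP (O : Set (Term n)) (f : MvPolynomial (Fin (n + 1)) K) : ℕ :=
  f.support.sup (ind O)

/-- A homogeneous `∂𝒪`-prebasis: a family `g σ = σ - Σ_{τ ∈ 𝒪_{deg σ}} c_{στ} τ`. -/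
def IsPrebasis (O : Set (Term n)) (g : Term n → MvPolynomial (Fin (n + 1)) K) : Prop :=
  ∀ σ ∈ border O, ∀ τ ∈ (monomial σ (1 : K) - g σ).support, τ ∈ O ∧ tdeg τ = tdeg σ

/-- The set of border reductors `𝒯G = {η·g_σ : σ ∈ ∂𝒪, η ∈ 𝒯_σ}`. -/
def reductors (O : Set (Term n)) (lab : Term n → ℕ)
    (g : Term n → MvPolynomial (Fin (n + 1)) K) : Set (MvPolynomial (Fin (n + 1)) K) :=
  {p | ∃ σ ∈ border O, ∃ η ∈ mulSet O lab σ, p = monomial η (1 : K) * g σ}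

/-- The degree-`d` border reductors `𝒯G_d = 𝒯G ∩ P_d`. -/
def reductorsDeg (O : Set (Term n)) (lab : Term n → ℕ)
    (g : Term n → MvPolynomial (Fin (n + 1)) K) (d : ℕ) :
    Set (MvPolynomial (Fin (n + 1)) K) :=
  reductors O lab g ∩ {p | p.IsHomogeneous d}

/-- One step of the border reduction relation `→_G`. -/
def Step (O : Set (Term n)) (lab : Term n → ℕ)
    (g : Term n → MvPolynomial (Fin (n + 1)) K)
    (f h : MvPolynomial (Fin (n + 1)) K) : Prop :=
  ∃ σ ∈ border O, ∃ η ∈ mulSet O lab σ, η + σ ∈ f.support ∧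
    h = f - f.coeff (η + σ) • (monomial η (1 : K) * g σ)

/-- The border reduction relation `→⁺_G` (finitely many, possibly zero, steps). -/
def Reduces (O : Set (Term n)) (lab : Term n → ℕ)
    (g : Term n → MvPolynomial (Fin (n + 1)) K) :
    MvPolynomial (Fin (n + 1)) K → MvPolynomial (Fin (n + 1)) K → Prop :=
  Relation.ReflTransGen (Step O lab g)

/-- The `K`-vector space spanned by a set of terms. -/
noncomputable def spanTerms (K : Type*) [Field K] (S : Set (Term n)) :
    Submodule K (MvPolynomial (Fin (n + 1)) K) :=
  Submodule.span K ((fun τ => monomial τ (1 : K)) '' S)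

/-- The ideal `(G)` generated by a `∂𝒪`-prebasis. -/
noncomputable def idealG (O : Set (Term n)) (g : Term n → MvPolynomial (Fin (n + 1)) K) :
    Ideal (MvPolynomial (Fin (n + 1)) K) :=
  Ideal.span (g '' border O)

/-- The degree-`d` part `I_d` of an ideal, as a `K`-vector subspace. -/
noncomputable def degPart (I : Ideal (MvPolynomial (Fin (n + 1)) K)) (d : ℕ) :
    Submodule K (MvPolynomial (Fin (n + 1)) K) :=
  Submodule.restrictScalars K I ⊓ homogeneousSubmodule (Fin (n + 1)) K d

/-- Homogeneous ideal. -/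
def IsHomogeneousIdeal (I : Ideal (MvPolynomial (Fin (n + 1)) K)) : Prop :=
  ∀ f ∈ I, ∀ d : ℕ, homogeneousComponent d f ∈ I

/-- `G` is a homogeneous `∂𝒪`-basis of `J`: it is a prebasis contained in `J` and for every
`d` one has `P_d = J_d ⊕ ⟨𝒪_d⟩`, i.e. the residue classes of `𝒪_d` are a basis of `P_d/J_d`. -/
def IsBorderBasisOf (O : Set (Term n)) (g : Term n → MvPolynomial (Fin (n + 1)) K)
    (J : Ideal (MvPolynomial (Fin (n + 1)) K)) : Prop :=
  IsPrebasis O g ∧ (∀ σ ∈ border O, g σ ∈ J) ∧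
    ∀ d : ℕ, degPart J d ⊔ spanTerms K (Od O d) = homogeneousSubmodule (Fin (n + 1)) K d ∧
      Disjoint (degPart J d) (spanTerms K (Od O d))

/-- An `m`-lower representation of `f` by `𝒯G`: `f = Σ c_j • η_j·g_{σ_j}` with distinct
pairs `(η_j, σ_j)`, `η_j ∈ 𝒯_{σ_j}` and `ind(η_j σ_j) ≤ m`. -/
def HasLRep (O : Set (Term n)) (lab : Term n → ℕ)
    (g : Term n → MvPolynomial (Fin (n + 1)) K)
    (f : MvPolynomial (Fin (n + 1)) K) (m : ℕ) : Prop :=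
  ∃ (s : Finset (Term n × Term n)) (c : Term n × Term n → K),
    (∀ p ∈ s, p.2 ∈ border O ∧ p.1 ∈ mulSet O lab p.2 ∧ ind O (p.1 + p.2) ≤ m) ∧
    f = ∑ p ∈ s, c p • (monomial p.1 (1 : K) * g p.2)

/-- An `m`-lower representation of `f` by `𝒯G_d`. -/
def HasLRepDeg (O : Set (Term n)) (lab : Term n → ℕ)
    (g : Term n → MvPolynomial (Fin (n + 1)) K)
    (f : MvPolynomial (Fin (n + 1)) K) (m d : ℕ) : Prop :=
  ∃ (s : Finset (Term n × Term n)) (c : Term n × Term n → K),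
    (∀ p ∈ s, p.2 ∈ border O ∧ p.1 ∈ mulSet O lab p.2 ∧ ind O (p.1 + p.2) ≤ m ∧
      (monomial p.1 (1 : K) * g p.2).IsHomogeneous d) ∧
    f = ∑ p ∈ s, c p • (monomial p.1 (1 : K) * g p.2)

/-- The subtype of terms of `𝒪` of degree `d`. -/
abbrev OdSub (O : Set (Term n)) (d : ℕ) : Type _ := {τ : Term n // τ ∈ Od O d}

lemma tdeg_component_lt {d : ℕ} (m : Term n) (h : tdeg m = d) (i : Fin (n + 1)) :
    m i < d + 1 := by
  have : m i ≤ tdeg m :=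
    Finset.single_le_sum (f := fun j => m j) (fun j _ => Nat.zero_le _) (Finset.mem_univ i)
  omega

instance (O : Set (Term n)) (d : ℕ) : Finite (OdSub O d) := by
  have hinj : Function.Injective
      (fun τ : OdSub O d => fun i : Fin (n + 1) =>
        (⟨τ.1 i, tdeg_component_lt τ.1 τ.2.2 i⟩ : Fin (d + 1))) := by
    intro a b hab
    apply Subtype.ext
    apply Finsupp.ext
    intro i
    simpa using congrArg Fin.val (congrFun hab i)
  exact Finite.of_injective _ hinj

noncomputable instance (O : Set (Term n)) (d : ℕ) : Fintype (OdSub O d) :=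
  Fintype.ofFinite _

open scoped Classical in
/-- The `r`-th `d`-graded formal multiplication matrix of a prebasis `G`,
with rows indexed by `𝒪_{d+1}` and columns by `𝒪_d`. -/
noncomputable def multMatrix (O : Set (Term n))
    (g : Term n → MvPolynomial (Fin (n + 1)) K) (r : Fin (n + 1)) (d : ℕ) :
    Matrix (OdSub O (d + 1)) (OdSub O d) K :=
  Matrix.of fun τ' τ =>
    if τ.1 + Finsupp.single r 1 ∈ O then
      (if τ.1 + Finsupp.single r 1 = τ'.1 then 1 else 0)
    else (monomial (τ.1 + Finsupp.single r 1) (1 : K)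
            - g (τ.1 + Finsupp.single r 1)).coeff τ'.1

/-- The minimum degree of a border term. -/
noncomputable def minDegBorder (O : Set (Term n)) : ℕ := sInf (tdeg '' border O)

/-- The `d`-th Macaulay transformation `a^{⟨d⟩}`, computed greedily. -/
noncomputable def macaulay : ℕ → ℕ → ℕ
  | 0, _ => 0
  | d + 1, a =>
    if a = 0 then 0
    else
      Nat.choose (sSup {k | Nat.choose k (d + 1) ≤ a} + 1) (d + 2) +
        macaulay d (a - Nat.choose (sSup {k | Nat.choose k (d + 1) ≤ a}) (d + 1))

/-- An ideal is generated in degrees `≤ m` if it is generated by its homogeneous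
elements of degree `≤ m`. -/
def GeneratedInDegLE (I : Ideal (MvPolynomial (Fin (n + 1)) K)) (m : ℕ) : Prop :=
  I = Ideal.span {f | f ∈ I ∧ ∃ d ≤ m, f.IsHomogeneous d}

/-!
Every term outside `𝒪` lies in exactly one cone `C(σ)`, and because the labeling is ordered by
degree, the index of `η·σ ∈ C(σ)` exceeds `deg η`, while every other term `η·τ` of the reductor
`η·g_σ` has index at most `deg η`. Hence a reduction step never raises the index, which turns any
reduction `f →⁺_G h` into an `ind_𝒪(f)`-lower representation of `f - h` (homogeneous of degree
`d` when `f` is), and reducing terms of maximal index terminates in a polynomial supported on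
`𝒪`. Finally, in a nonzero combination of reductors, the cone term of maximal index cannot cancel,
so `⟨𝒯G⟩ ∩ ⟨𝒪⟩ = 0`; thus `f - h ∈ ⟨𝒯G⟩` forces `h` to be that normal form of `f`.
-/

section Terms

lemma tdeg_eq_degree (m : Term n) : tdeg m = m.degree :=
  (Finsupp.degree_eq_sum m).symm

lemma weight_one_eq_tdeg (m : Term n) : Finsupp.weight 1 m = tdeg m := by
  rw [tdeg_eq_degree, Finsupp.degree_eq_weight_one]
  rfl

lemma tdeg_add (a b : Term n) : tdeg (a + b) = tdeg a + tdeg b := by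
  simp only [tdeg_eq_degree, map_add]

lemma tdeg_single_one (r : Fin (n + 1)) : tdeg (Finsupp.single r 1 : Term n) = 1 := by
  rw [tdeg_eq_degree, Finsupp.degree_single]

lemma exists_add_single_le {a b : Term n} (h : a < b) :
    ∃ r, a + Finsupp.single r 1 ≤ b := by
  obtain ⟨r, hr⟩ : ∃ r, a r < b r := by
    by_contra! hc
    exact h.ne (le_antisymm h.le hc)
  refine ⟨r, fun i => ?_⟩
  rcases eq_or_ne r i with rfl | hi
  · simpa using hr
  · simpa [Finsupp.single_eq_of_ne' hi] using h.le i

lemma tdeg_strictMono : StrictMono (tdeg (n := n)) := fun a b h => by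
  obtain ⟨r, hr⟩ := exists_add_single_le h
  have := Finsupp.degree_mono hr
  rw [← tdeg_eq_degree, ← tdeg_eq_degree, tdeg_add, tdeg_single_one] at this
  omega

end Terms

section Index

variable {O : Set (Term n)}

lemma IsOrderIdeal.zero_mem (hO : IsOrderIdeal O) : (0 : Term n) ∈ O := by
  obtain ⟨τ, hτ⟩ := hO.1
  exact hO.2 τ hτ 0 zero_le

lemma borderClosure_mono : Monotone (borderClosure O) :=
  monotone_nat_of_le_succ fun _ => Set.subset_union_left

lemma mem_borderClosure_iff {k : ℕ} {t : Term n} :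
    t ∈ borderClosure O k ↔ ∃ τ ∈ O, τ ≤ t ∧ tdeg t ≤ tdeg τ + k := by
  induction k generalizing t with
  | zero =>
    refine ⟨fun ht => ⟨t, ht, le_rfl, le_rfl⟩, fun ⟨τ, hτ, hle, hdeg⟩ => ?_⟩
    obtain rfl | hlt := hle.eq_or_lt
    · exact hτ
    · exact absurd (tdeg_strictMono hlt) (by omega)
  | succ k ih =>
    constructor
    · rintro (ht | ⟨-, r, t', ht', rfl⟩)
      · obtain ⟨τ, hτ, hle, hdeg⟩ := ih.1 ht
        exact ⟨τ, hτ, hle, by omega⟩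
      · obtain ⟨τ, hτ, hle, hdeg⟩ := ih.1 ht'
        refine ⟨τ, hτ, hle.trans le_self_add, ?_⟩
        rw [tdeg_add, tdeg_single_one]
        omega
    · rintro ⟨τ, hτ, hle, hdeg⟩
      by_cases hk : tdeg t ≤ tdeg τ + k
      · exact Or.inl (ih.2 ⟨τ, hτ, hle, hk⟩)
      obtain ⟨r, hr⟩ := exists_add_single_le (hle.lt_of_ne (by rintro rfl; omega))
      have ht : t - Finsupp.single r 1 + Finsupp.single r 1 = t :=
        tsub_add_cancel_of_le (le_add_self.trans hr)
      have ht' : t - Finsupp.single r 1 ∈ borderClosure O k := by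
        refine ih.2 ⟨τ, hτ, le_tsub_of_add_le_right hr, ?_⟩
        have := congrArg tdeg ht
        rw [tdeg_add, tdeg_single_one] at this
        omega
      by_cases hmem : t ∈ borderClosure O k
      · exact Or.inl hmem
      · exact Or.inr ⟨hmem, r, _, ht', ht.symm⟩

lemma ind_le_iff (hO : IsOrderIdeal O) {t : Term n} {m : ℕ} :
    ind O t ≤ m ↔ ∃ τ ∈ O, τ ≤ t ∧ tdeg t ≤ tdeg τ + m := by
  rw [← mem_borderClosure_iff]
  refine ⟨fun h => borderClosure_mono h ?_, fun h => Nat.sInf_le h⟩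
  have ht : t ∈ borderClosure O (tdeg t) :=
    mem_borderClosure_iff.2 ⟨0, hO.zero_mem, zero_le, by simp [tdeg]⟩
  exact Nat.sInf_mem (s := {k | t ∈ borderClosure O k}) ⟨_, ht⟩

lemma ind_eq_zero_iff (hO : IsOrderIdeal O) {t : Term n} : ind O t = 0 ↔ t ∈ O := by
  rw [← Nat.le_zero, ind_le_iff hO, ← mem_borderClosure_iff]
  rfl

lemma ind_add_le (hO : IsOrderIdeal O) {τ : Term n} (hτ : τ ∈ O) (η : Term n) :
    ind O (η + τ) ≤ tdeg η :=
  (ind_le_iff hO).2 ⟨τ, hτ, le_add_self, by rw [tdeg_add, add_comm]⟩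

lemma exists_border_le (hO : IsOrderIdeal O) {τ t : Term n} (hτ : τ ∈ O) (hle : τ ≤ t)
    (ht : t ∉ O) : ∃ σ ∈ border O, σ ≤ t ∧ tdeg τ < tdeg σ := by
  obtain ⟨r, hr⟩ := exists_add_single_le (hle.lt_of_ne (by rintro rfl; exact ht hτ))
  have hdeg : tdeg (τ + Finsupp.single r 1) = tdeg τ + 1 := by rw [tdeg_add, tdeg_single_one]
  by_cases hmem : τ + Finsupp.single r 1 ∈ O
  · have : tdeg t - tdeg (τ + Finsupp.single r 1) < tdeg t - tdeg τ := by
      have := tdeg_strictMono.monotone hr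
      omega
    obtain ⟨σ, hσ, hσt, hdegσ⟩ := exists_border_le hO hmem hr ht
    exact ⟨σ, hσ, hσt, by omega⟩
  · exact ⟨_, ⟨hmem, r, τ, hτ, rfl⟩, hr, by omega⟩
termination_by tdeg t - tdeg τ

end Index

section Cones

variable {O : Set (Term n)} {lab : Term n → ℕ}

def conePairs (O : Set (Term n)) (lab : Term n → ℕ) : Set (Term n × Term n) :=
  {q | q.2 ∈ border O ∧ q.1 ∈ mulSet O lab q.2}

lemma add_notMem_of_mem_conePairs (hO : IsOrderIdeal O) {q : Term n × Term n}
    (hq : q ∈ conePairs O lab) : q.1 + q.2 ∉ O :=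
  fun h => hq.1.1 (hO.2 _ h q.2 le_add_self)

/-- A divisor `τ ∈ 𝒪` of `η·σ` with `deg τ ≥ deg σ` would produce a border divisor of `η·σ` of
larger degree, hence of larger label than `σ`. -/
lemma tdeg_lt_ind_of_mem_conePairs (hO : IsOrderIdeal O) (hlab : DegOrderedLabeling O lab)
    {q : Term n × Term n} (hq : q ∈ conePairs O lab) : tdeg q.1 < ind O (q.1 + q.2) := by
  by_contra! hle
  obtain ⟨τ, hτ, hτle, hdeg⟩ := (ind_le_iff hO).1 hle
  obtain ⟨σ', hσ', hσ'le, hτσ'⟩ := exists_border_le hO hτ hτle (add_notMem_of_mem_conePairs hO hq)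
  rw [tdeg_add] at hdeg
  refine hq.2 σ' hσ' ?_ hσ'le
  by_contra! hlab'
  obtain hlt | heq := hlab'.lt_or_eq
  · have := hlab.2 _ hσ' _ hq.1 hlt
    omega
  · rw [hlab.1 hσ' hq.1 heq] at hτσ'
    omega

lemma exists_mem_conePairs_add_eq (hO : IsOrderIdeal O) {t : Term n} (ht : t ∉ O) :
    ∃ q ∈ conePairs O lab, q.1 + q.2 = t := by
  classical
  obtain ⟨σ₀, hσ₀, hσ₀t, -⟩ := exists_border_le hO hO.zero_mem zero_le ht
  let B := (Finset.Iic t).filter (· ∈ border O)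
  obtain ⟨σ, hσB, hσmax⟩ := Finset.exists_max_image B lab ⟨σ₀, by simp [B, hσ₀, hσ₀t]⟩
  simp only [B, Finset.mem_filter, Finset.mem_Iic] at hσB
  refine ⟨(t - σ, σ), ⟨hσB.2, fun σ' hσ' (hlt : lab σ < lab σ') hle => ?_⟩,
    tsub_add_cancel_of_le hσB.1⟩
  rw [tsub_add_cancel_of_le hσB.1] at hle
  have := hσmax σ' (by simp [B, hσ', hle])
  omega

lemma injOn_add_conePairs (hlab : DegOrderedLabeling O lab) :
    Set.InjOn (fun q : Term n × Term n => q.1 + q.2) (conePairs O lab) := by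
  rintro ⟨η, σ⟩ ⟨hσ, hη⟩ ⟨η', σ'⟩ ⟨hσ', hη'⟩ (heq : η + σ = η' + σ')
  obtain rfl : σ = σ' := by
    by_contra hne
    rcases (hlab.1.ne hσ hσ' hne).lt_or_gt with h | h
    · exact hη σ' hσ' h (heq ▸ le_add_self)
    · exact hη' σ hσ h (heq ▸ le_add_self)
  rw [add_left_inj] at heq
  rw [heq]

end Cones

section Reductors

variable {O : Set (Term n)} {lab : Term n → ℕ} {g : Term n → MvPolynomial (Fin (n + 1)) K}

noncomputable def reductor (g : Term n → MvPolynomial (Fin (n + 1)) K) (q : Term n × Term n) :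
    MvPolynomial (Fin (n + 1)) K :=
  monomial q.1 1 * g q.2

lemma reductors_eq_image : reductors O lab g = reductor g '' conePairs O lab := by
  ext p
  simp only [reductors, reductor, conePairs, Set.mem_image, Prod.exists]
  constructor
  · rintro ⟨σ, hσ, η, hη, rfl⟩
    exact ⟨η, σ, ⟨hσ, hη⟩, rfl⟩
  · rintro ⟨η, σ, ⟨hσ, hη⟩, rfl⟩
    exact ⟨σ, hσ, η, hη, rfl⟩

lemma reductor_mem_reductors {q : Term n × Term n} (hq : q ∈ conePairs O lab) :
    reductor g q ∈ reductors O lab g :=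
  ⟨q.2, hq.1, q.1, hq.2, rfl⟩

lemma IsPrebasis.coeff_self (hg : IsPrebasis O g) {σ : Term n} (hσ : σ ∈ border O) :
    coeff σ (g σ) = 1 := by
  have h : σ ∉ (monomial σ (1 : K) - g σ).support := fun h => hσ.1 (hg σ hσ σ h).1
  rw [mem_support_iff, not_not, coeff_sub, coeff_monomial, if_pos rfl, sub_eq_zero] at h
  exact h.symm

lemma IsPrebasis.mem_support (hg : IsPrebasis O g) {σ β : Term n} (hσ : σ ∈ border O)
    (hβ : β ∈ (g σ).support) : β = σ ∨ β ∈ O ∧ tdeg β = tdeg σ := by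
  classical
  rw [show g σ = monomial σ 1 - (monomial σ 1 - g σ) by ring] at hβ
  rcases Finset.mem_union.1 (support_sub _ _ _ hβ) with h | h
  · exact Or.inl (Finset.mem_singleton.1 (support_monomial_subset h))
  · exact Or.inr (hg σ hσ β h)

lemma coeff_reductor_self (hg : IsPrebasis O g) {q : Term n × Term n} (hq : q.2 ∈ border O) :
    coeff (q.1 + q.2) (reductor g q) = 1 := by
  rw [reductor, coeff_monomial_mul, hg.coeff_self hq, one_mul]

lemma mem_support_reductor (hg : IsPrebasis O g) {q : Term n × Term n} (hq : q.2 ∈ border O)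
    {β : Term n} (hβ : β ∈ (reductor g q).support) :
    β = q.1 + q.2 ∨ ∃ τ ∈ O, tdeg τ = tdeg q.2 ∧ β = q.1 + τ := by
  classical
  obtain ⟨a, ha, γ, hγ, rfl⟩ := Finset.mem_add.1 (support_mul _ _ hβ)
  obtain rfl := Finset.mem_singleton.1 (support_monomial_subset ha)
  rcases hg.mem_support hq hγ with rfl | ⟨hγO, hγdeg⟩
  · exact Or.inl rfl
  · exact Or.inr ⟨γ, hγO, hγdeg, rfl⟩

lemma ind_lt_of_mem_support_reductor (hO : IsOrderIdeal O) (hlab : DegOrderedLabeling O lab)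
    (hg : IsPrebasis O g) {q : Term n × Term n} (hq : q ∈ conePairs O lab) {β : Term n}
    (hβ : β ∈ (reductor g q).support) (hne : β ≠ q.1 + q.2) : ind O β < ind O (q.1 + q.2) := by
  obtain h | ⟨τ, hτ, -, rfl⟩ := mem_support_reductor hg hq.1 hβ
  · exact absurd h hne
  · exact (ind_add_le hO hτ q.1).trans_lt (tdeg_lt_ind_of_mem_conePairs hO hlab hq)

lemma ind_le_of_mem_support_reductor (hO : IsOrderIdeal O) (hlab : DegOrderedLabeling O lab)
    (hg : IsPrebasis O g) {q : Term n × Term n} (hq : q ∈ conePairs O lab) {β : Term n}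
    (hβ : β ∈ (reductor g q).support) : ind O β ≤ ind O (q.1 + q.2) := by
  obtain rfl | hne := eq_or_ne β (q.1 + q.2)
  · exact le_rfl
  · exact (ind_lt_of_mem_support_reductor hO hlab hg hq hβ hne).le

lemma isHomogeneous_reductor (hg : IsPrebasis O g) {q : Term n × Term n}
    (hq : q.2 ∈ border O) : (reductor g q).IsHomogeneous (tdeg (q.1 + q.2)) := by
  intro β hβ
  obtain rfl | ⟨τ, -, hτ, rfl⟩ := mem_support_reductor hg hq (mem_support_iff.2 hβ) <;>
    simp only [weight_one_eq_tdeg, tdeg_add, *]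

lemma coeff_reductor_eq_zero (hO : IsOrderIdeal O) (hlab : DegOrderedLabeling O lab)
    (hg : IsPrebasis O g) {q q₀ : Term n × Term n} (hq : q ∈ conePairs O lab)
    (hq₀ : q₀ ∈ conePairs O lab) (hne : q ≠ q₀) (hind : ind O (q.1 + q.2) ≤ ind O (q₀.1 + q₀.2)) :
    coeff (q₀.1 + q₀.2) (reductor g q) = 0 := by
  by_contra h
  have hmem := mem_support_iff.2 h
  obtain heq | hne' := eq_or_ne (q₀.1 + q₀.2) (q.1 + q.2)
  · exact hne (injOn_add_conePairs hlab hq₀ hq heq).symm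
  · exact (ind_lt_of_mem_support_reductor hO hlab hg hq hmem hne').not_ge hind

lemma spanTerms_eq_restrictSupport (S : Set (Term n)) :
    spanTerms K S = restrictSupport K S :=
  (restrictSupport_eq_span K S).symm

lemma disjoint_span_reductors_spanTerms (hO : IsOrderIdeal O) (hlab : DegOrderedLabeling O lab)
    (hg : IsPrebasis O g) : Disjoint (Submodule.span K (reductors O lab g)) (spanTerms K O) := by
  classical
  rw [Submodule.disjoint_def, reductors_eq_image]
  rintro p hp hpO
  obtain ⟨l, hl, rfl⟩ := (Finsupp.mem_span_image_iff_linearCombination K).1 hp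
  rw [spanTerms_eq_restrictSupport, mem_restrictSupport_iff] at hpO
  by_contra hp0
  obtain ⟨q₀, hq₀, hmax⟩ := Finset.exists_max_image l.support (fun q => ind O (q.1 + q.2))
    (Finsupp.support_nonempty_iff.2 (by rintro rfl; simp at hp0))
  have hconePairs : ∀ q ∈ l.support, q ∈ conePairs O lab := fun q hq => hl hq
  have hcoeff : coeff (q₀.1 + q₀.2) (Finsupp.linearCombination K (reductor g) l) = l q₀ := by
    rw [Finsupp.linearCombination_apply, Finsupp.sum, coeff_sum,
      Finset.sum_eq_single_of_mem q₀ hq₀ fun q hq hne => by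
        rw [coeff_smul, coeff_reductor_eq_zero hO hlab hg (hconePairs q hq) (hconePairs q₀ hq₀)
          hne (hmax q hq), smul_zero],
      coeff_smul, coeff_reductor_self hg (hconePairs q₀ hq₀).1, smul_eq_mul, mul_one]
  refine add_notMem_of_mem_conePairs hO (hconePairs q₀ hq₀) (hpO ?_)
  rw [Finset.mem_coe, mem_support_iff, hcoeff]
  exact Finsupp.mem_support_iff.1 hq₀

end Reductors

section Reduction

variable {O : Set (Term n)} {lab : Term n → ℕ} {g : Term n → MvPolynomial (Fin (n + 1)) K}

lemma step_iff {f f' : MvPolynomial (Fin (n + 1)) K} :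
    Step O lab g f f' ↔ ∃ q ∈ conePairs O lab, q.1 + q.2 ∈ f.support ∧
      f' = f - f.coeff (q.1 + q.2) • reductor g q := by
  constructor
  · rintro ⟨σ, hσ, η, hη, hmem, rfl⟩
    exact ⟨(η, σ), ⟨hσ, hη⟩, hmem, rfl⟩
  · rintro ⟨⟨η, σ⟩, ⟨hσ, hη⟩, hmem, rfl⟩
    exact ⟨σ, hσ, η, hη, hmem, rfl⟩

lemma Step.indP_le (hO : IsOrderIdeal O) (hlab : DegOrderedLabeling O lab)
    (hg : IsPrebasis O g) {f f' : MvPolynomial (Fin (n + 1)) K} (hst : Step O lab g f f') :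
    indP O f' ≤ indP O f := by
  classical
  obtain ⟨q, hq, hmem, rfl⟩ := step_iff.1 hst
  refine Finset.sup_le fun β hβ => ?_
  rcases Finset.mem_union.1 (support_sub _ _ _ hβ) with h | h
  · exact Finset.le_sup h
  · exact (ind_le_of_mem_support_reductor hO hlab hg hq (support_smul h)).trans
      (Finset.le_sup hmem)

lemma isHomogeneous_reductor_of_mem_support (hg : IsPrebasis O g) {q : Term n × Term n}
    (hq : q.2 ∈ border O) {f : MvPolynomial (Fin (n + 1)) K} {d : ℕ} (hf : f.IsHomogeneous d)
    (hmem : q.1 + q.2 ∈ f.support) : (reductor g q).IsHomogeneous d := by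
  have hd := hf (mem_support_iff.1 hmem)
  rw [weight_one_eq_tdeg] at hd
  exact hd ▸ isHomogeneous_reductor hg hq

lemma Step.isHomogeneous (hg : IsPrebasis O g) {f f' : MvPolynomial (Fin (n + 1)) K} {d : ℕ}
    (hst : Step O lab g f f') (hf : f.IsHomogeneous d) : f'.IsHomogeneous d := by
  obtain ⟨q, hq, hmem, rfl⟩ := step_iff.1 hst
  rw [smul_eq_C_mul]
  exact hf.sub ((isHomogeneous_reductor_of_mem_support hg hq.1 hf hmem).C_mul _)

lemma Reduces.indP_le (hO : IsOrderIdeal O) (hlab : DegOrderedLabeling O lab)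
    (hg : IsPrebasis O g) {f h : MvPolynomial (Fin (n + 1)) K} (hred : Reduces O lab g f h) :
    indP O h ≤ indP O f := by
  induction hred with
  | refl => exact le_rfl
  | tail _ hst ih => exact (hst.indP_le hO hlab hg).trans ih

lemma Reduces.isHomogeneous (hg : IsPrebasis O g) {f h : MvPolynomial (Fin (n + 1)) K} {d : ℕ}
    (hred : Reduces O lab g f h) (hf : f.IsHomogeneous d) : h.IsHomogeneous d := by
  induction hred with
  | refl => exact hf
  | tail _ hst ih => exact hst.isHomogeneous hg ih

lemma Reduces.sub_mem_span {f h : MvPolynomial (Fin (n + 1)) K} {S : Set (Term n × Term n)}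
    (hS : ∀ b, Reduces O lab g f b → ∀ q ∈ conePairs O lab, q.1 + q.2 ∈ b.support → q ∈ S)
    (hred : Reduces O lab g f h) : f - h ∈ Submodule.span K (reductor g '' S) := by
  induction hred with
  | refl => simp
  | @tail b c hfb hst ih =>
    obtain ⟨q, hq, hmem, rfl⟩ := step_iff.1 hst
    rw [sub_sub_eq_add_sub, add_sub_right_comm]
    exact add_mem ih (Submodule.smul_mem _ _
      (Submodule.subset_span (Set.mem_image_of_mem _ (hS b hfb q hq hmem))))

lemma exists_step_of_notMem (hO : IsOrderIdeal O) (hlab : DegOrderedLabeling O lab)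
    (hg : IsPrebasis O g) {f : MvPolynomial (Fin (n + 1)) K} {β : Term n} (hβ : β ∈ f.support)
    (hβO : β ∉ O) :
    ∃ f', Step O lab g f f' ∧ ∀ γ ∈ f'.support, γ ∈ f.support ∧ γ ≠ β ∨ ind O γ < ind O β := by
  classical
  obtain ⟨q, hq, rfl⟩ := exists_mem_conePairs_add_eq (lab := lab) hO hβO
  refine ⟨_, step_iff.2 ⟨q, hq, hβ, rfl⟩, fun γ hγ => ?_⟩
  obtain rfl | hne := eq_or_ne γ (q.1 + q.2)
  · simp [coeff_reductor_self hg hq.1] at hγ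
  rcases Finset.mem_union.1 (support_sub _ _ _ hγ) with h | h
  · exact Or.inl ⟨h, hne⟩
  · exact Or.inr (ind_lt_of_mem_support_reductor hO hlab hg hq (support_smul h) hne)

lemma exists_reduces_ind_le (hO : IsOrderIdeal O) (hlab : DegOrderedLabeling O lab)
    (hg : IsPrebasis O g) {m : ℕ} {f : MvPolynomial (Fin (n + 1)) K}
    (hf : ∀ β ∈ f.support, ind O β ≤ m + 1) :
    ∃ f', Reduces O lab g f f' ∧ ∀ β ∈ f'.support, ind O β ≤ m := by
  classical
  generalize hN : (f.support.filter (ind O · = m + 1)).card = N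
  induction N using Nat.strong_induction_on generalizing f with
  | _ N ih =>
  by_cases htop : ∃ β ∈ f.support, ind O β = m + 1
  swap
  · exact ⟨f, .refl, fun β hβ => Nat.le_of_lt_succ ((hf β hβ).lt_of_ne fun h => htop ⟨β, hβ, h⟩)⟩
  obtain ⟨β, hβ, hβm⟩ := htop
  obtain ⟨f', hst, hf'⟩ :=
    exists_step_of_notMem hO hlab hg hβ (by rw [← ind_eq_zero_iff hO]; omega)
  have hsub : f'.support.filter (ind O · = m + 1) ⊆
      (f.support.filter (ind O · = m + 1)).erase β := by
    intro γ hγ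
    rw [Finset.mem_filter] at hγ
    rw [Finset.mem_erase, Finset.mem_filter]
    rcases hf' γ hγ.1 with ⟨h, hne⟩ | h
    · exact ⟨hne, h, hγ.2⟩
    · omega
  have hlt := (Finset.card_le_card hsub).trans_lt
    (Finset.card_erase_lt_of_mem (Finset.mem_filter.2 ⟨hβ, hβm⟩))
  have hf'_le : ∀ γ ∈ f'.support, ind O γ ≤ m + 1 := fun γ hγ => by
    rcases hf' γ hγ with ⟨h, -⟩ | h
    exacts [hf γ h, by omega]
  obtain ⟨f₀, hred, hf₀⟩ := ih _ (hN ▸ hlt) hf'_le rfl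
  exact ⟨f₀, .head hst hred, hf₀⟩

lemma exists_reduces_mem_spanTerms (hO : IsOrderIdeal O) (hlab : DegOrderedLabeling O lab)
    (hg : IsPrebasis O g) (f : MvPolynomial (Fin (n + 1)) K) :
    ∃ f₀, Reduces O lab g f f₀ ∧ f₀ ∈ spanTerms K O := by
  suffices ∀ m (f : MvPolynomial (Fin (n + 1)) K), (∀ β ∈ f.support, ind O β ≤ m) →
      ∃ f₀, Reduces O lab g f f₀ ∧ f₀ ∈ spanTerms K O from
    this _ f fun β hβ => Finset.le_sup (f := ind O) hβ
  intro m
  induction m with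
  | zero =>
    refine fun f hf => ⟨f, .refl, ?_⟩
    rw [spanTerms_eq_restrictSupport, mem_restrictSupport_iff]
    exact fun β hβ => (ind_eq_zero_iff hO).1 (Nat.le_zero.1 (hf β hβ))
  | succ m ih =>
    intro f hf
    obtain ⟨f', hred, hf'⟩ := exists_reduces_ind_le hO hlab hg hf
    obtain ⟨f₀, hred', hf₀⟩ := ih f' hf'
    exact ⟨f₀, hred.trans hred', hf₀⟩

end Reduction

theorem _root_.Submodule.mem_span_image_iff_exists_finset_sum {ι R M : Type*} [Semiring R]
    [AddCommMonoid M] [Module R M] {v : ι → M} {s : Set ι} {x : M} :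
    x ∈ Submodule.span R (v '' s) ↔
      ∃ (t : Finset ι) (c : ι → R), (∀ i ∈ t, i ∈ s) ∧ x = ∑ i ∈ t, c i • v i := by
  refine ⟨fun hx => ?_, ?_⟩
  · obtain ⟨l, hl, rfl⟩ := (Finsupp.mem_span_image_iff_linearCombination R).1 hx
    exact ⟨l.support, l, fun i hi => hl hi, rfl⟩
  · rintro ⟨t, c, hts, rfl⟩
    exact Submodule.sum_mem _ fun i hi =>
      Submodule.smul_mem _ _ (Submodule.subset_span (Set.mem_image_of_mem v (hts i hi)))

section LowerRepresentations

variable {O : Set (Term n)} {lab : Term n → ℕ} {g : Term n → MvPolynomial (Fin (n + 1)) K}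

lemma hasLRep_iff_mem_span {p : MvPolynomial (Fin (n + 1)) K} {m : ℕ} :
    HasLRep O lab g p m ↔
      p ∈ Submodule.span K (reductor g '' {q ∈ conePairs O lab | ind O (q.1 + q.2) ≤ m}) := by
  rw [Submodule.mem_span_image_iff_exists_finset_sum]
  simp only [HasLRep, reductor, conePairs, Set.mem_ofPred_eq, and_assoc]

lemma hasLRepDeg_iff_mem_span {p : MvPolynomial (Fin (n + 1)) K} {m d : ℕ} :
    HasLRepDeg O lab g p m d ↔ p ∈ Submodule.span K (reductor g ''
      {q ∈ conePairs O lab | ind O (q.1 + q.2) ≤ m ∧ (reductor g q).IsHomogeneous d}) := by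
  rw [Submodule.mem_span_image_iff_exists_finset_sum]
  simp only [HasLRepDeg, reductor, conePairs, Set.mem_ofPred_eq, and_assoc]

end LowerRepresentations

theorem reduction_tfae_general (O : Set (Term n)) (hO : IsOrderIdeal O)
    (lab : Term n → ℕ) (hlab : DegOrderedLabeling O lab)
    (g : Term n → MvPolynomial (Fin (n + 1)) K) (hg : IsPrebasis O g)
    (f h : MvPolynomial (Fin (n + 1)) K) (hh : h ∈ spanTerms K O) :
    ((f - h ∈ Submodule.span K (reductors O lab g) ↔ Reduces O lab g f h) ∧
     (Reduces O lab g f h ↔ HasLRep O lab g (f - h) (indP O f))) ∧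
    ∀ d : ℕ, f.IsHomogeneous d → h ∈ spanTerms K (Od O d) →
      ((f - h ∈ Submodule.span K (reductorsDeg O lab g d) ↔ Reduces O lab g f h) ∧
       (Reduces O lab g f h ↔ HasLRepDeg O lab g (f - h) (indP O f) d)) := by
  have reduces_of_mem_span (hs : f - h ∈ Submodule.span K (reductors O lab g)) :
      Reduces O lab g f h := by
    obtain ⟨f₀, hred, hf₀⟩ := exists_reduces_mem_spanTerms hO hlab hg f
    have hdiff : f₀ - h ∈ Submodule.span K (reductors O lab g) := by
      rw [← sub_sub_sub_cancel_left h f₀ f, reductors_eq_image]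
      rw [reductors_eq_image] at hs
      exact sub_mem hs (hred.sub_mem_span fun _ _ q hq _ => hq)
    have hf₀h := Submodule.disjoint_def.1 (disjoint_span_reductors_spanTerms hO hlab hg) _ hdiff
      (sub_mem hf₀ hh)
    rwa [sub_eq_zero.1 hf₀h] at hred
  have lrep_of_reduces (hr : Reduces O lab g f h) : HasLRep O lab g (f - h) (indP O f) :=
    hasLRep_iff_mem_span.2 (hr.sub_mem_span fun b hb q hq hmem =>
      ⟨hq, (Finset.le_sup hmem).trans (hb.indP_le hO hlab hg)⟩)
  have mem_span_of_lrep (hl : HasLRep O lab g (f - h) (indP O f)) :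
      f - h ∈ Submodule.span K (reductors O lab g) := by
    rw [reductors_eq_image]
    exact Submodule.span_mono (Set.image_mono (Set.sep_subset _ _)) (hasLRep_iff_mem_span.1 hl)
  refine ⟨⟨⟨reduces_of_mem_span, fun hr => mem_span_of_lrep (lrep_of_reduces hr)⟩,
    ⟨lrep_of_reduces, fun hl => reduces_of_mem_span (mem_span_of_lrep hl)⟩⟩, fun d hfd _ => ?_⟩
  have lrepDeg_of_reduces (hr : Reduces O lab g f h) : HasLRepDeg O lab g (f - h) (indP O f) d :=
    hasLRepDeg_iff_mem_span.2 (hr.sub_mem_span fun b hb q hq hmem =>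
      ⟨hq, (Finset.le_sup hmem).trans (hb.indP_le hO hlab hg),
        isHomogeneous_reductor_of_mem_support hg hq.1 (hb.isHomogeneous hg hfd) hmem⟩)
  have mem_spanDeg_of_lrepDeg (hl : HasLRepDeg O lab g (f - h) (indP O f) d) :
      f - h ∈ Submodule.span K (reductorsDeg O lab g d) := by
    refine Submodule.span_mono ?_ (hasLRepDeg_iff_mem_span.1 hl)
    rintro _ ⟨q, ⟨hq, -, hhom⟩, rfl⟩
    exact ⟨reductor_mem_reductors hq, hhom⟩
  have reduces_of_mem_spanDeg (hs : f - h ∈ Submodule.span K (reductorsDeg O lab g d)) :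
      Reduces O lab g f h :=
    reduces_of_mem_span (Submodule.span_mono Set.inter_subset_left hs)
  exact ⟨⟨reduces_of_mem_spanDeg, fun hr => mem_spanDeg_of_lrepDeg (lrepDeg_of_reduces hr)⟩,
    ⟨lrepDeg_of_reduces, fun hl => reduces_of_mem_spanDeg (mem_spanDeg_of_lrepDeg hl)⟩⟩

/-- **Characterization of reduction.** For nonzero `f` and `h ∈ ⟨𝒪⟩`:
`f - h ∈ ⟨𝒯G⟩` ⟺ `f →⁺_G h` ⟺ `f - h` has an `ind_𝒪(f)`-lower representation by `𝒯G`;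
and if `f` is homogeneous of degree `d` and `h ∈ ⟨𝒪_d⟩`, these are further equivalent to
`f - h ∈ ⟨𝒯G_d⟩` and to `f - h` having an `ind_𝒪(f)`-LRep by `𝒯G_d`. -/
theorem reduction_tfae (O : Set (Term n)) (hO : IsOrderIdeal O)
    (lab : Term n → ℕ) (hlab : DegOrderedLabeling O lab)
    (g : Term n → MvPolynomial (Fin (n + 1)) K) (hg : IsPrebasis O g)
    (f h : MvPolynomial (Fin (n + 1)) K) (hf : f ≠ 0) (hh : h ∈ spanTerms K O) :
    ((f - h ∈ Submodule.span K (reductors O lab g) ↔ Reduces O lab g f h) ∧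
     (Reduces O lab g f h ↔ HasLRep O lab g (f - h) (indP O f))) ∧
    ∀ d : ℕ, f.IsHomogeneous d → h ∈ spanTerms K (Od O d) →
      ((f - h ∈ Submodule.span K (reductorsDeg O lab g d) ↔ Reduces O lab g f h) ∧
       (Reduces O lab g f h ↔ HasLRepDeg O lab g (f - h) (indP O f) d)) :=
  reduction_tfae_general O hO lab hlab g hg f h hh

end Border
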